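/- arXiv:2208.03864 — 2 statements merged into one kernel-verified Lean document; each statement's English description precedes it below -/
import Mathlib

section
/- Let n > 4 be even and m ≤ n/2. Let F be a vectorial bent (n,m)-function with F(0) = 0, i.e. W_F(μ,ν) ∈ {2^{n/2}, −2^{n/2}} for every μ ∈ 𝔽₂^m∖{0} and every ν ∈ 𝔽₂ⁿ. Then C_F is a minimal linear code of length 2ⁿ−1 and dimension n+m, its minimum nonzero Hamming weight equals 2^{n−1} − 2^{n/2−1}, and over the pairs (μ,ν) ∈ 𝔽₂^m × 𝔽₂ⁿ: |{(μ,ν) : wt(c(μ,ν)) = 2^{n−1}}| = 2ⁿ−1, |{(μ,ν) : wt(c(μ,ν)) = 2^{n−1} + 2^{n/2−1}}| = (2^m−1)(2^{n−1} − 2^{n/2−1}), and |{(μ,ν) : wt(c(μ,ν)) = 2^{n−1} − 2^{n/2−1}}| = (2^m−1)(2^{n−1} + 2^{n/2−1}). -/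
def dotp {n : ℕ} (v x : Fin n → ZMod 2) : ZMod 2 := ∑ i, v i * x i

def wht {n : ℕ} (f : (Fin n → ZMod 2) → ZMod 2) (ν : Fin n → ZMod 2) : ℤ :=
  ∑ x : Fin n → ZMod 2, (-1 : ℤ) ^ (f x + dotp ν x).val

def whtF {n m : ℕ} (F : (Fin n → ZMod 2) → (Fin m → ZMod 2))
    (μ : Fin m → ZMod 2) (ν : Fin n → ZMod 2) : ℤ :=
  wht (fun x => dotp μ (F x)) ν

def cw {n m : ℕ} (F : (Fin n → ZMod 2) → (Fin m → ZMod 2))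
    (μ : Fin m → ZMod 2) (ν : Fin n → ZMod 2) :
    {x : Fin n → ZMod 2 // x ≠ 0} → ZMod 2 :=
  fun x => dotp μ (F x.1) + dotp ν x.1

def codeF {n m : ℕ} (F : (Fin n → ZMod 2) → (Fin m → ZMod 2)) :
    Set ({x : Fin n → ZMod 2 // x ≠ 0} → ZMod 2) :=
  Set.range fun p : (Fin m → ZMod 2) × (Fin n → ZMod 2) => cw F p.1 p.2

def wt {n : ℕ} (c : {x : Fin n → ZMod 2 // x ≠ 0} → ZMod 2) : ℕ :=
  (Finset.univ.filter fun x => c x = 1).card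

def IsMinimal {n : ℕ} (C : Set ({x : Fin n → ZMod 2 // x ≠ 0} → ZMod 2)) : Prop :=
  ∀ c ∈ C, ∀ c' ∈ C, c ≠ 0 → c' ≠ 0 →
    {x | c' x = 1} ⊆ {x | c x = 1} → c' = c

def weights {n m : ℕ} (F : (Fin n → ZMod 2) → (Fin m → ZMod 2)) : Set ℕ :=
  {w | ∃ c ∈ codeF F, c ≠ 0 ∧ wt c = w}

/-!
Since `F 0 = 0`, the weights of `C_F` are read off the Walsh spectrum:
`2 wt(c(μ,ν)) = 2ⁿ - W_F(μ,ν)`. For `μ = 0` the spectrum is `2ⁿ` at `ν = 0` and `0` elsewhere;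
for `μ ≠ 0` it is `±2^(n/2)`, and `∑_ν W_F(μ,ν) = 2ⁿ` fixes how often each sign occurs.
Hence all nonzero weights lie between `w_min = 2^(n-1) - 2^(n/2-1)` and
`w_max = 2^(n-1) + 2^(n/2-1)`, so `(μ,ν) ↦ c(μ,ν)` is injective, and since `w_max < 2 w_min`
the code is minimal (Ashikhmin–Barg): if `supp c' ⊊ supp c`, then `c - c'` is a nonzero
codeword of weight `wt c - wt c' ≤ w_max - w_min < w_min`.
-/

open Finset

lemma dotp_eq_dotProduct {n : ℕ} (v x : Fin n → ZMod 2) : dotp v x = v ⬝ᵥ x := rfl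

lemma neg_one_pow_val_add (a b : ZMod 2) :
    (-1 : ℤ) ^ (a + b).val = (-1) ^ a.val * (-1) ^ b.val := by
  revert a b; decide

lemma neg_one_pow_val_eq_one_iff (a : ZMod 2) : (-1 : ℤ) ^ a.val = 1 ↔ a = 0 := by
  revert a; decide

def dotpChar {n : ℕ} (v : Fin n → ZMod 2) : AddChar (Fin n → ZMod 2) ℤ where
  toFun x := (-1) ^ (dotp v x).val
  map_zero_eq_one' := by simp [dotp_eq_dotProduct]
  map_add_eq_mul' x y := by rw [dotp_eq_dotProduct, dotProduct_add, neg_one_pow_val_add]; rfl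

lemma dotpChar_eq_zero_iff {n : ℕ} (v : Fin n → ZMod 2) : dotpChar v = 0 ↔ v = 0 := by
  refine ⟨fun h => funext fun i => ?_, fun h => ?_⟩
  · have hi := DFunLike.congr_fun h (Pi.single i 1)
    simp only [dotpChar, AddChar.coe_mk, AddChar.zero_apply, dotp_eq_dotProduct,
      dotProduct_single, mul_one] at hi
    rw [Pi.zero_apply, ← neg_one_pow_val_eq_one_iff, hi]
  · ext x; simp [dotpChar, h, dotp_eq_dotProduct]

lemma sum_neg_one_pow_dotp {n : ℕ} (v : Fin n → ZMod 2) :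
    ∑ x : Fin n → ZMod 2, (-1 : ℤ) ^ (dotp v x).val = if v = 0 then 2 ^ n else 0 := by
  have h := AddChar.sum_eq_ite (dotpChar v)
  simp only [dotpChar_eq_zero_iff] at h
  simpa [dotpChar] using h

lemma sum_neg_one_pow_val {ι : Type*} [Fintype ι] (g : ι → ZMod 2) :
    ∑ x, (-1 : ℤ) ^ (g x).val = Fintype.card ι - 2 * #{x | g x = 1} := by
  have h (a : ZMod 2) : (-1 : ℤ) ^ a.val = 1 - 2 * if a = 1 then 1 else 0 := by
    revert a; decide
  simp only [h, sum_sub_distrib, ← mul_sum, sum_boole, sum_const, card_univ, nsmul_eq_mul, mul_one]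

lemma sum_wht {n : ℕ} (f : (Fin n → ZMod 2) → ZMod 2) :
    ∑ ν, wht f ν = 2 ^ n * (-1) ^ (f 0).val := by
  simp only [wht, neg_one_pow_val_add]
  rw [sum_comm]
  simp only [← mul_sum, dotp_eq_dotProduct, dotProduct_comm _ (_ : Fin n → ZMod 2)]
  simp only [← dotp_eq_dotProduct, sum_neg_one_pow_dotp, mul_ite, zero_mul, Fintype.sum_ite_eq',
    mul_comm]

lemma two_mul_card_wht_eq_two_pow {n k : ℕ} (f : (Fin n → ZMod 2) → ZMod 2) (hf0 : f 0 = 0)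
    (hnk : n = 2 * k) (hbent : ∀ ν, wht f ν = 2 ^ k ∨ wht f ν = -2 ^ k) :
    2 * #{ν | wht f ν = 2 ^ k} = 2 ^ n + 2 ^ k := by
  set P := #{ν | wht f ν = 2 ^ k}
  set Q := #{ν | ¬ wht f ν = 2 ^ k}
  have hPQ : (P + Q : ℤ) = 2 ^ n := by
    exact_mod_cast (card_filter_add_card_filter_not _).trans (by simp)
  have hsum : (P - Q : ℤ) * 2 ^ k = 2 ^ n := by
    have h := sum_wht f
    rw [hf0, ZMod.val_zero, pow_zero, mul_one] at h
    rw [← h,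
      ← sum_filter_add_sum_filter_not univ (fun ν => wht f ν = 2 ^ k),
      sum_congr rfl fun ν hν => (mem_filter.1 hν).2,
      sum_congr rfl fun ν hν => (hbent ν).resolve_left (mem_filter.1 hν).2]
    simp only [sum_const, nsmul_eq_mul]
    ring
  have hpow : (2 : ℤ) ^ n = 2 ^ k * 2 ^ k := by rw [hnk, two_mul, pow_add]
  have : ((2 * P : ℕ) : ℤ) * 2 ^ k = (2 ^ n + 2 ^ k : ℕ) * 2 ^ k := by
    push_cast; linear_combination (2 : ℤ) ^ k * hPQ + hsum + hpow
  exact_mod_cast mul_right_cancel₀ (by positivity) this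

lemma wt_eq_card_filter {n : ℕ} (g : (Fin n → ZMod 2) → ZMod 2) (hg : g 0 = 0) :
    wt (fun x => g x.1) = #{x | g x = 1} := by
  have hsub : wt (fun x => g x.1) = #((univ.filter (g · = 1)).subtype (· ≠ 0)) := by
    unfold wt; congr 1; ext x; simp
  rw [hsub, card_subtype, filter_true_of_mem]
  rintro x hx rfl
  simp [hg] at hx

lemma two_mul_wt_cw {n m : ℕ} {F : (Fin n → ZMod 2) → (Fin m → ZMod 2)} (h0 : F 0 = 0)
    (μ : Fin m → ZMod 2) (ν : Fin n → ZMod 2) :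
    2 * (wt (cw F μ ν) : ℤ) = 2 ^ n - whtF F μ ν := by
  have hcard := sum_neg_one_pow_val fun x => dotp μ (F x) + dotp ν x
  rw [Fintype.card_fun, ZMod.card, Fintype.card_fin] at hcard
  unfold cw
  rw [whtF, wht, hcard,
    wt_eq_card_filter (fun x => dotp μ (F x) + dotp ν x) (by simp [h0, dotp_eq_dotProduct])]
  push_cast; ring

lemma whtF_zero_left {n m : ℕ} (F : (Fin n → ZMod 2) → (Fin m → ZMod 2)) (ν : Fin n → ZMod 2) :
    whtF F 0 ν = if ν = 0 then 2 ^ n else 0 := by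
  simp only [whtF, wht, dotp_eq_dotProduct, zero_dotProduct, zero_add]
  exact sum_neg_one_pow_dotp ν

lemma cw_add {n m : ℕ} (F : (Fin n → ZMod 2) → (Fin m → ZMod 2))
    (μ μ' : Fin m → ZMod 2) (ν ν' : Fin n → ZMod 2) :
    cw F (μ + μ') (ν + ν') = cw F μ ν + cw F μ' ν' := by
  funext x; simp only [cw, dotp_eq_dotProduct, add_dotProduct, Pi.add_apply]; ring

def cwHom {n m : ℕ} (F : (Fin n → ZMod 2) → (Fin m → ZMod 2)) :
    (Fin m → ZMod 2) × (Fin n → ZMod 2) →+ ({x : Fin n → ZMod 2 // x ≠ 0} → ZMod 2) where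
  toFun p := cw F p.1 p.2
  map_zero' := by funext x; simp [cw, dotp_eq_dotProduct]
  map_add' p q := cw_add F p.1 q.1 p.2 q.2

lemma codeF_eq_range_cwHom {n m : ℕ} (F : (Fin n → ZMod 2) → (Fin m → ZMod 2)) :
    codeF F = (cwHom F).range := by
  rw [AddMonoidHom.coe_range]; rfl

lemma wt_zero {n : ℕ} : wt (0 : {x : Fin n → ZMod 2 // x ≠ 0} → ZMod 2) = 0 := by
  simp [wt]

lemma wt_sub_add_wt_of_subset {n : ℕ} {c c' : {x : Fin n → ZMod 2 // x ≠ 0} → ZMod 2}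
    (h : {x | c' x = 1} ⊆ {x | c x = 1}) : wt (c - c') + wt c' = wt c := by
  have hpt (a b : ZMod 2) (hab : b = 1 → a = 1) : a - b = 1 ↔ a = 1 ∧ ¬ b = 1 := by
    revert a b; decide
  have hsub : univ.filter (c' · = 1) ⊆ univ.filter (c · = 1) := by
    intro x; simpa using @h x
  have hdiff : univ.filter (fun x => (c - c') x = 1)
      = univ.filter (c · = 1) \ univ.filter (c' · = 1) := by
    ext x; simp [hpt _ _ (@h x)]
  unfold wt; rw [hdiff, card_sdiff_add_card_eq_card hsub]

lemma isMinimal_of_wt_bounds {n : ℕ} (C : AddSubgroup ({x : Fin n → ZMod 2 // x ≠ 0} → ZMod 2))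
    {a b : ℕ} (hab : b < 2 * a) (hC : ∀ c ∈ C, c ≠ 0 → a ≤ wt c ∧ wt c ≤ b) :
    IsMinimal (C : Set ({x : Fin n → ZMod 2 // x ≠ 0} → ZMod 2)) := by
  intro c hc c' hc' hc0 hc'0 hsub
  by_contra hne
  have hwd := hC (c - c') (C.sub_mem hc hc') (sub_ne_zero.2 (Ne.symm hne))
  have hwc := hC c hc hc0
  have hwc' := hC c' hc' hc'0
  have := wt_sub_add_wt_of_subset hsub
  omega

lemma card_filter_prod_eq_of_fibres {α β : Type*} [Fintype α] [Fintype β] [DecidableEq α]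
    (p : α → β → Prop) [∀ a, DecidablePred (p a)] (a₀ : α) (A B : ℕ)
    (h : ∀ a, #{b | p a b} = if a = a₀ then A else B) :
    #{q : α × β | p q.1 q.2} = A + (Fintype.card α - 1) * B := by
  rw [card_filter, Fintype.sum_prod_type]
  simp only [← card_filter, h]
  rw [← add_sum_erase _ _ (mem_univ a₀), if_pos rfl,
    sum_congr rfl fun a ha => if_neg (ne_of_mem_erase ha), sum_const,
    card_erase_of_mem (mem_univ _), card_univ, smul_eq_mul]

def IsVectorialBent {n m : ℕ} (F : (Fin n → ZMod 2) → (Fin m → ZMod 2)) (k : ℕ) : Prop :=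
  ∀ μ : Fin m → ZMod 2, μ ≠ 0 → ∀ ν, whtF F μ ν = 2 ^ k ∨ whtF F μ ν = -2 ^ k

section VectorialBent

variable {n m k : ℕ} {F : (Fin n → ZMod 2) → (Fin m → ZMod 2)}

lemma abs_whtF_le (hbent : IsVectorialBent F k)
    {μ : Fin m → ZMod 2} {ν : Fin n → ZMod 2} (h : (μ, ν) ≠ 0) : |whtF F μ ν| ≤ 2 ^ k := by
  by_cases hμ : μ = 0
  · subst hμ
    have hν : ν ≠ 0 := fun hν => h (by rw [hν]; rfl)
    simp [whtF_zero_left, hν]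
  · rcases hbent μ hμ ν with h | h <;> simp [h]

lemma wt_cw_bounds (h0 : F 0 = 0) (hbent : IsVectorialBent F k)
    (hnk : n = 2 * k) (hk : 1 ≤ k) {μ : Fin m → ZMod 2} {ν : Fin n → ZMod 2} (h : (μ, ν) ≠ 0) :
    2 ^ (n - 1) - 2 ^ (k - 1) ≤ wt (cw F μ ν) ∧ wt (cw F μ ν) ≤ 2 ^ (n - 1) + 2 ^ (k - 1) := by
  have hwt := two_mul_wt_cw h0 μ ν
  obtain ⟨hlo, hhi⟩ := abs_le.1 (abs_whtF_le hbent h)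
  have hpow : 2 ^ (k - 1) ≤ 2 ^ (n - 1) := Nat.pow_le_pow_right two_pos (by omega)
  have hn := pow_sub_one_mul (show n ≠ 0 by omega) (2 : ℤ)
  have hk := pow_sub_one_mul (show k ≠ 0 by omega) (2 : ℤ)
  constructor <;> zify [hpow] <;> linarith

lemma cwHom_injective (h0 : F 0 = 0) (hbent : IsVectorialBent F k)
    (hnk : n = 2 * k) (hk : 1 ≤ k) : Function.Injective (cwHom F) := by
  refine (injective_iff_map_eq_zero _).2 fun p hp => by_contra fun h => ?_
  have hlo := (wt_cw_bounds h0 hbent hnk hk h).1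
  rw [show cw F p.1 p.2 = 0 from hp, wt_zero] at hlo
  have : 2 ^ (k - 1) < 2 ^ (n - 1) := Nat.pow_lt_pow_right Nat.one_lt_two (by omega)
  omega

lemma wt_bounds_of_mem_codeF (h0 : F 0 = 0) (hbent : IsVectorialBent F k) (hnk : n = 2 * k)
    (hk : 1 ≤ k) {c : {x : Fin n → ZMod 2 // x ≠ 0} → ZMod 2} (hc : c ∈ codeF F) (hc0 : c ≠ 0) :
    2 ^ (n - 1) - 2 ^ (k - 1) ≤ wt c ∧ wt c ≤ 2 ^ (n - 1) + 2 ^ (k - 1) := by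
  obtain ⟨p, rfl⟩ := hc
  exact wt_cw_bounds (μ := p.1) (ν := p.2) h0 hbent hnk hk
    fun hp => hc0 (by rw [show p = 0 from hp]; exact map_zero (cwHom F))

lemma isMinimal_codeF (h0 : F 0 = 0) (hbent : IsVectorialBent F k) (hnk : n = 2 * k)
    (hk : 2 ≤ k) : IsMinimal (codeF F) := by
  have hpow : 2 ^ (k - 1) * 4 ≤ 2 ^ (n - 1) := by
    rw [show 4 = 2 ^ 2 by rfl, ← pow_add]; exact Nat.pow_le_pow_right two_pos (by omega)
  have hpos : 0 < 2 ^ (k - 1) := by positivity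
  rw [codeF_eq_range_cwHom]
  refine isMinimal_of_wt_bounds _ (a := 2 ^ (n - 1) - 2 ^ (k - 1))
    (b := 2 ^ (n - 1) + 2 ^ (k - 1)) (by omega) fun c hc => ?_
  exact wt_bounds_of_mem_codeF h0 hbent hnk (by omega) (by rwa [codeF_eq_range_cwHom])

lemma card_codeF (h0 : F 0 = 0) (hbent : IsVectorialBent F k)
    (hnk : n = 2 * k) (hk : 1 ≤ k) : Nat.card (codeF F) = 2 ^ (n + m) := by
  rw [codeF_eq_range_cwHom, AddMonoidHom.coe_range,
    Nat.card_range_of_injective (cwHom_injective h0 hbent hnk hk)]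
  simp [pow_add, mul_comm]

lemma wt_cw_eq_iff (h0 : F 0 = 0) (μ : Fin m → ZMod 2) (ν : Fin n → ZMod 2) (w : ℕ) :
    wt (cw F μ ν) = w ↔ whtF F μ ν = 2 ^ n - 2 * w := by
  have := two_mul_wt_cw h0 μ ν
  constructor
  · rintro rfl; linarith
  · intro h; exact_mod_cast (show (wt (cw F μ ν) : ℤ) = w by linarith)

lemma wt_cw_eq_two_pow_pred_iff (h0 : F 0 = 0) (hn : n ≠ 0) (μ : Fin m → ZMod 2)
    (ν : Fin n → ZMod 2) : wt (cw F μ ν) = 2 ^ (n - 1) ↔ whtF F μ ν = 0 := by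
  rw [wt_cw_eq_iff h0]
  push_cast
  rw [mul_comm, pow_sub_one_mul hn, sub_self]

lemma wt_cw_eq_sub_iff (h0 : F 0 = 0) (hnk : n = 2 * k) (hk : 1 ≤ k) (μ : Fin m → ZMod 2)
    (ν : Fin n → ZMod 2) : wt (cw F μ ν) = 2 ^ (n - 1) - 2 ^ (k - 1) ↔ whtF F μ ν = 2 ^ k := by
  rw [wt_cw_eq_iff h0, Nat.cast_sub (Nat.pow_le_pow_right two_pos (by omega))]
  push_cast
  rw [mul_sub, mul_comm, pow_sub_one_mul (by omega), mul_comm, pow_sub_one_mul (by omega),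
    sub_sub_cancel]

lemma wt_cw_eq_add_iff (h0 : F 0 = 0) (hnk : n = 2 * k) (hk : 1 ≤ k) (μ : Fin m → ZMod 2)
    (ν : Fin n → ZMod 2) : wt (cw F μ ν) = 2 ^ (n - 1) + 2 ^ (k - 1) ↔ whtF F μ ν = -2 ^ k := by
  rw [wt_cw_eq_iff h0]
  push_cast
  rw [mul_add, mul_comm, pow_sub_one_mul (by omega), mul_comm, pow_sub_one_mul (by omega),
    sub_add_cancel_left]

lemma card_whtF_eq_zero (hbent : IsVectorialBent F k)
    (μ : Fin m → ZMod 2) : #{ν | whtF F μ ν = 0} = if μ = 0 then 2 ^ n - 1 else 0 := by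
  split_ifs with hμ
  · subst hμ
    simp [whtF_zero_left, filter_ne', card_erase_of_mem]
  · refine card_eq_zero.2 (filter_eq_empty_iff.2 fun ν _ => ?_)
    rcases hbent μ hμ ν with h | h <;> simp [h]

lemma card_whtF_eq_two_pow (h0 : F 0 = 0) (hbent : IsVectorialBent F k)
    (hnk : n = 2 * k) (hk : 1 ≤ k) (μ : Fin m → ZMod 2) :
    #{ν | whtF F μ ν = 2 ^ k} = if μ = 0 then 0 else 2 ^ (n - 1) + 2 ^ (k - 1) := by
  split_ifs with hμ
  · subst hμ
    refine card_eq_zero.2 (filter_eq_empty_iff.2 fun ν _ => ?_)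
    have : (2 : ℤ) ^ n ≠ 2 ^ k := (pow_right_strictMono₀ one_lt_two).injective.ne (by omega)
    rw [whtF_zero_left]
    split_ifs
    exacts [this, (pow_ne_zero _ two_ne_zero).symm]
  · have h := two_mul_card_wht_eq_two_pow (fun x => dotp μ (F x))
      (by simp [h0, dotp_eq_dotProduct]) hnk (hbent μ hμ)
    have hn := pow_sub_one_mul (show n ≠ 0 by omega) 2
    have hk := pow_sub_one_mul (show k ≠ 0 by omega) 2
    unfold whtF
    omega

lemma card_whtF_eq_neg_two_pow (h0 : F 0 = 0) (hbent : IsVectorialBent F k)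
    (hnk : n = 2 * k) (hk : 1 ≤ k) (μ : Fin m → ZMod 2) :
    #{ν | whtF F μ ν = -2 ^ k} = if μ = 0 then 0 else 2 ^ (n - 1) - 2 ^ (k - 1) := by
  split_ifs with hμ
  · subst hμ
    refine card_eq_zero.2 (filter_eq_empty_iff.2 fun ν _ => ?_)
    rw [whtF_zero_left]
    have hk : (0 : ℤ) < 2 ^ k := by positivity
    have hn : (0 : ℤ) < 2 ^ n := by positivity
    split_ifs <;> intro h <;> linarith
  · have hneg : #{ν | whtF F μ ν = -2 ^ k} = #{ν | ¬ whtF F μ ν = 2 ^ k} := by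
      have hpos : (0 : ℤ) < 2 ^ k := by positivity
      refine congrArg card (filter_congr fun ν _ => ?_)
      rcases hbent μ hμ ν with h | h <;> rw [h]
      · exact iff_of_false (fun h => by linarith) (not_not.2 rfl)
      · exact iff_of_true rfl fun h => by linarith
    have htotal := card_filter_add_card_filter_not (s := univ) (fun ν => whtF F μ ν = 2 ^ k)
    rw [card_whtF_eq_two_pow h0 hbent hnk hk, if_neg hμ, card_univ, Fintype.card_fun, ZMod.card,
      Fintype.card_fin] at htotal
    have hn := pow_sub_one_mul (show n ≠ 0 by omega) 2
    omega

lemma card_wt_cw_eq_two_pow_pred (h0 : F 0 = 0) (hbent : IsVectorialBent F k)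
    (hn : n ≠ 0) :
    #{p : (Fin m → ZMod 2) × (Fin n → ZMod 2) | wt (cw F p.1 p.2) = 2 ^ (n - 1)} = 2 ^ n - 1 := by
  simp only [wt_cw_eq_two_pow_pred_iff h0 hn]
  rw [card_filter_prod_eq_of_fibres (fun μ ν => whtF F μ ν = 0) 0 _ _ (card_whtF_eq_zero hbent)]
  simp

lemma card_wt_cw_eq_sub (h0 : F 0 = 0) (hbent : IsVectorialBent F k)
    (hnk : n = 2 * k) (hk : 1 ≤ k) :
    #{p : (Fin m → ZMod 2) × (Fin n → ZMod 2) | wt (cw F p.1 p.2) = 2 ^ (n - 1) - 2 ^ (k - 1)}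
      = (2 ^ m - 1) * (2 ^ (n - 1) + 2 ^ (k - 1)) := by
  simp only [wt_cw_eq_sub_iff h0 hnk hk]
  rw [card_filter_prod_eq_of_fibres (fun μ ν => whtF F μ ν = 2 ^ k) 0 _ _
    (card_whtF_eq_two_pow h0 hbent hnk hk)]
  simp

lemma card_wt_cw_eq_add (h0 : F 0 = 0) (hbent : IsVectorialBent F k)
    (hnk : n = 2 * k) (hk : 1 ≤ k) :
    #{p : (Fin m → ZMod 2) × (Fin n → ZMod 2) | wt (cw F p.1 p.2) = 2 ^ (n - 1) + 2 ^ (k - 1)}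
      = (2 ^ m - 1) * (2 ^ (n - 1) - 2 ^ (k - 1)) := by
  simp only [wt_cw_eq_add_iff h0 hnk hk]
  rw [card_filter_prod_eq_of_fibres (fun μ ν => whtF F μ ν = -2 ^ k) 0 _ _
    (card_whtF_eq_neg_two_pow h0 hbent hnk hk)]
  simp

lemma isLeast_weights (h0 : F 0 = 0) (hbent : IsVectorialBent F k)
    (hnk : n = 2 * k) (hk : 1 ≤ k) (hm : 0 < m) :
    IsLeast (weights F) (2 ^ (n - 1) - 2 ^ (k - 1)) := by
  refine ⟨?_, ?_⟩
  · obtain ⟨μ, hμ⟩ : ∃ μ : Fin m → ZMod 2, μ ≠ 0 := ⟨Pi.single ⟨0, hm⟩ 1, by simp⟩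
    have hcard := card_whtF_eq_two_pow h0 hbent hnk hk μ
    rw [if_neg hμ] at hcard
    obtain ⟨ν, hν⟩ := card_pos.1 (hcard ▸ Nat.add_pos_right _ (by positivity))
    refine ⟨cw F μ ν, ⟨(μ, ν), rfl⟩, ?_, (wt_cw_eq_sub_iff h0 hnk hk μ ν).2 (mem_filter.1 hν).2⟩
    exact ((cwHom_injective h0 hbent hnk hk).ne_iff' (x := (μ, ν)) (map_zero _)).2
      (by simp [hμ])
  · rintro _ ⟨c, hc, hc0, rfl⟩
    exact (wt_bounds_of_mem_codeF h0 hbent hnk hk hc hc0).1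

end VectorialBent

theorem stmt6_general (n m : ℕ) (hn : 4 < n) (hne : Even n) (hm1 : 1 ≤ m)
    (F : (Fin n → ZMod 2) → (Fin m → ZMod 2)) (h0 : F 0 = 0)
    (hbent : ∀ μ : Fin m → ZMod 2, μ ≠ 0 → ∀ ν : Fin n → ZMod 2,
      whtF F μ ν = 2 ^ (n / 2) ∨ whtF F μ ν = -2 ^ (n / 2)) :
    IsMinimal (codeF F) ∧
    Nat.card {x : Fin n → ZMod 2 // x ≠ 0} = 2 ^ n - 1 ∧
    Nat.card (codeF F) = 2 ^ (n + m) ∧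
    IsLeast (weights F) (2 ^ (n - 1) - 2 ^ (n / 2 - 1)) ∧
    (Finset.univ.filter fun p : (Fin m → ZMod 2) × (Fin n → ZMod 2) =>
        wt (cw F p.1 p.2) = 2 ^ (n - 1)).card = 2 ^ n - 1 ∧
    (Finset.univ.filter fun p : (Fin m → ZMod 2) × (Fin n → ZMod 2) =>
        wt (cw F p.1 p.2) = 2 ^ (n - 1) + 2 ^ (n / 2 - 1)).card
      = (2 ^ m - 1) * (2 ^ (n - 1) - 2 ^ (n / 2 - 1)) ∧
    (Finset.univ.filter fun p : (Fin m → ZMod 2) × (Fin n → ZMod 2) =>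
        wt (cw F p.1 p.2) = 2 ^ (n - 1) - 2 ^ (n / 2 - 1)).card
      = (2 ^ m - 1) * (2 ^ (n - 1) + 2 ^ (n / 2 - 1)) := by
  obtain ⟨k, hk⟩ := hne
  have hnk : n = 2 * k := by omega
  rw [show n / 2 = k by omega] at hbent ⊢
  exact ⟨isMinimal_codeF h0 hbent hnk (by omega),
    by simp [Nat.card_eq_fintype_card, Fintype.card_subtype_compl],
    card_codeF h0 hbent hnk (by omega),
    isLeast_weights h0 hbent hnk (by omega) hm1,
    card_wt_cw_eq_two_pow_pred h0 hbent (by omega),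
    card_wt_cw_eq_add h0 hbent hnk (by omega),
    card_wt_cw_eq_sub h0 hbent hnk (by omega)⟩

theorem stmt6 (n m : ℕ) (hn : 4 < n) (hne : Even n) (hm1 : 1 ≤ m) (hm : m ≤ n / 2)
    (F : (Fin n → ZMod 2) → (Fin m → ZMod 2)) (h0 : F 0 = 0)
    (hbent : ∀ μ : Fin m → ZMod 2, μ ≠ 0 → ∀ ν : Fin n → ZMod 2,
      whtF F μ ν = 2 ^ (n / 2) ∨ whtF F μ ν = -2 ^ (n / 2)) :
    IsMinimal (codeF F) ∧
    Nat.card {x : Fin n → ZMod 2 // x ≠ 0} = 2 ^ n - 1 ∧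
    Nat.card (codeF F) = 2 ^ (n + m) ∧
    IsLeast (weights F) (2 ^ (n - 1) - 2 ^ (n / 2 - 1)) ∧
    (Finset.univ.filter fun p : (Fin m → ZMod 2) × (Fin n → ZMod 2) =>
        wt (cw F p.1 p.2) = 2 ^ (n - 1)).card = 2 ^ n - 1 ∧
    (Finset.univ.filter fun p : (Fin m → ZMod 2) × (Fin n → ZMod 2) =>
        wt (cw F p.1 p.2) = 2 ^ (n - 1) + 2 ^ (n / 2 - 1)).card
      = (2 ^ m - 1) * (2 ^ (n - 1) - 2 ^ (n / 2 - 1)) ∧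
    (Finset.univ.filter fun p : (Fin m → ZMod 2) × (Fin n → ZMod 2) =>
        wt (cw F p.1 p.2) = 2 ^ (n - 1) - 2 ^ (n / 2 - 1)).card
      = (2 ^ m - 1) * (2 ^ (n - 1) + 2 ^ (n / 2 - 1)) :=
  stmt6_general n m hn hne hm1 F h0 hbent
end

section
/- Let f : 𝔽₂ⁿ → 𝔽₂ with f(0) = 0 satisfy: (a) W_f(ν) + W_f(ν') ≠ 2ⁿ and W_f(ν) − W_f(ν') ≠ 2ⁿ for all ν ≠ ν' in 𝔽₂ⁿ; and (b) 2·max_{ν} W_f(ν) − min_{ν} W_f(ν) ≥ 2ⁿ. Let G be an (n,m−1)-function with G(0) = 0 such that μ₁f + μ̃·G is not affine for every nonzero (μ₁,μ̃) ∈ 𝔽₂ × 𝔽₂^{m−1}, and such that the code C_G is minimal. Let F = (f,G) be the (n,m)-function x ↦ (f(x), G(x)). Then the code C_F violates the AB condition: if w_min and w_max denote the minimum and maximum Hamming weights of nonzero codewords of C_F, then 2·w_min ≤ w_max. -/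
lemma dotp_zero_right {n : ℕ} (v : Fin n → ZMod 2) : dotp v 0 = 0 := by
  simp [dotp]

lemma dotp_zero_left {n : ℕ} (v : Fin n → ZMod 2) : dotp 0 v = 0 := by
  simp [dotp]

lemma dotp_cons {n : ℕ} (a : ZMod 2) (b : Fin n → ZMod 2) :
    dotp (Fin.cons 1 0 : Fin (n+1) → ZMod 2) (Fin.cons a b) = a := by
  simp [dotp, Fin.sum_univ_succ]

lemma key {n : ℕ} (h : (Fin n → ZMod 2) → ZMod 2) (h0 : h 0 = 0) :
    2 * (wt (fun x : {x : Fin n → ZMod 2 // x ≠ 0} => h x.1) : ℤ)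
      = 2 ^ n - ∑ x : Fin n → ZMod 2, (-1 : ℤ) ^ (h x).val := by
  have step : ∀ x : Fin n → ZMod 2, (-1 : ℤ) ^ (h x).val = 1 - 2 * ((h x).val : ℤ) := by
    intro x
    have : (h x).val < 2 := ZMod.val_lt _
    interval_cases hv : (h x).val <;> simp
  rw [Finset.sum_congr rfl fun x _ => step x, Finset.sum_sub_distrib]
  simp only [Finset.sum_const, Finset.card_univ, nsmul_eq_mul, mul_one]
  rw [← Finset.mul_sum]
  have hcard : (Fintype.card (Fin n → ZMod 2) : ℤ) = 2 ^ n := by simp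
  have hsum : ∑ x : Fin n → ZMod 2, ((h x).val : ℤ)
      = ∑ x : {x : Fin n → ZMod 2 // x ≠ 0}, ((h x.1).val : ℤ) := by
    rw [← Finset.sum_subtype (Finset.univ.filter (· ≠ 0)) (by simp) (fun x => ((h x).val : ℤ)),
      Finset.sum_filter]
    apply Finset.sum_congr rfl
    intro x _
    by_cases hx : x = 0 <;> simp [hx, h0]
  have hval : ∀ a : ZMod 2, (if a = 1 then (1 : ℤ) else 0) = (a.val : ℤ) := by decide
  have hwt : (wt (fun x : {x : Fin n → ZMod 2 // x ≠ 0} => h x.1) : ℤ)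
      = ∑ x : {x : Fin n → ZMod 2 // x ≠ 0}, ((h x.1).val : ℤ) := by
    rw [wt, Finset.card_filter]
    push_cast
    exact Finset.sum_congr rfl fun x _ => hval _
  rw [hcard, hwt, ← hsum]
  ring

theorem stmt10 (n m' : ℕ) (f : (Fin n → ZMod 2) → ZMod 2) (hf0 : f 0 = 0)
    (ha : ∀ ν ν' : Fin n → ZMod 2, ν ≠ ν' →
      wht f ν + wht f ν' ≠ 2 ^ n ∧ wht f ν - wht f ν' ≠ 2 ^ n)
    (hb : ∃ M mi : ℤ,
      IsGreatest {w : ℤ | ∃ ν : Fin n → ZMod 2, wht f ν = w} M ∧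
      IsLeast {w : ℤ | ∃ ν : Fin n → ZMod 2, wht f ν = w} mi ∧
      2 ^ n ≤ 2 * M - mi)
    (G : (Fin n → ZMod 2) → (Fin m' → ZMod 2)) (hG0 : G 0 = 0)
    (hna : ∀ (μ₁ : ZMod 2) (μt : Fin m' → ZMod 2), ¬(μ₁ = 0 ∧ μt = 0) →
      ¬ ∃ (ν : Fin n → ZMod 2) (ε : ZMod 2),
        ∀ x, μ₁ * f x + dotp μt (G x) = dotp ν x + ε)
    (hGmin : IsMinimal (codeF G))
    (F : (Fin n → ZMod 2) → (Fin (m' + 1) → ZMod 2))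
    (hF : ∀ x, F x = Fin.cons (f x) (G x))
    (wmin wmax : ℕ)
    (hwmin : IsLeast (weights F) wmin) (hwmax : IsGreatest (weights F) wmax) :
    2 * wmin ≤ wmax := by
  obtain ⟨M, mi, hM, hmi, hbd⟩ := hb
  obtain ⟨ν, hν⟩ := hM.1
  obtain ⟨ν', hν'⟩ := hmi.1
  set μ : Fin (m' + 1) → ZMod 2 := Fin.cons 1 0 with hμ
  have hdF : ∀ x, dotp μ (F x) = f x := by
    intro x; rw [hF x, hμ, dotp_cons]
  -- general facts about the codewords cw F μ ν₀
  have hcw : ∀ ν₀ : Fin n → ZMod 2,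
      cw F μ ν₀ = fun x : {x : Fin n → ZMod 2 // x ≠ 0} => (f x.1 + dotp ν₀ x.1) := by
    intro ν₀; funext x; simp [cw, hdF]
  have hne : ∀ ν₀ : Fin n → ZMod 2, cw F μ ν₀ ≠ 0 := by
    intro ν₀ hzero
    apply hna 1 0 (by simp)
    refine ⟨ν₀, 0, fun x => ?_⟩
    rw [one_mul, dotp_zero_left, add_zero, add_zero]
    by_cases hx : x = 0
    · rw [hx, hf0, dotp_zero_right]
    · have h1 : cw F μ ν₀ ⟨x, hx⟩ = 0 := by rw [hzero]; rfl
      rw [hcw] at h1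
      have : f x + dotp ν₀ x = 0 := h1
      have h2 : f x = dotp ν₀ x := by
        have := congrArg (· + dotp ν₀ x) this
        simpa [add_assoc, CharTwo.add_self_eq_zero] using this
      exact h2
  have hwteq : ∀ ν₀ : Fin n → ZMod 2, 2 * (wt (cw F μ ν₀) : ℤ) = 2 ^ n - wht f ν₀ := by
    intro ν₀
    rw [hcw ν₀]
    exact key (fun x => f x + dotp ν₀ x) (by simp [hf0, dotp_zero_right])
  have hmem : ∀ ν₀ : Fin n → ZMod 2, wt (cw F μ ν₀) ∈ weights F := by
    intro ν₀
    exact ⟨cw F μ ν₀, ⟨(μ, ν₀), rfl⟩, hne ν₀, rfl⟩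
  have h1 : wmin ≤ wt (cw F μ ν) := hwmin.2 (hmem ν)
  have h2 : wt (cw F μ ν') ≤ wmax := hwmax.2 (hmem ν')
  have e1 : 2 * (wt (cw F μ ν) : ℤ) = 2 ^ n - M := by rw [hwteq, hν]
  have e2 : 2 * (wt (cw F μ ν') : ℤ) = 2 ^ n - mi := by rw [hwteq, hν']
  have h1' : (wmin : ℤ) ≤ wt (cw F μ ν) := by exact_mod_cast h1
  have h2' : (wt (cw F μ ν') : ℤ) ≤ wmax := by exact_mod_cast h2
  have : 2 * (wmin : ℤ) ≤ wmax := by linarith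
  exact_mod_cast this
end
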